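/- arXiv:1811.09857 — 2 statements merged into one kernel-verified Lean document; each statement's English description precedes it below -/
import Mathlib

section
/- Let Φ : [0,1] × ℝ → ℝ be C², let ℓ > 0, and for each n let u_n ∈ A_n(0,1) be nondecreasing with u_n(0) = 0 and u_n(1) = ℓ. If u_n → u in L¹(0,1), then the Riemann sums of the force term converge to the integral: Σ_{i=0}^{n} λ_n Φ(iλ_n, u_n(iλ_n)) → ∫_0^1 Φ(x,u(x)) dx as n → +∞. -/
open MeasureTheory Set Filter Topology

noncomputable section

/-- The effective potential `J₀`, defined as the inf-convolution
`J₀(z) = inf { J₂(z) + (1/2)(J₁(z₁)+J₁(z₂)) : (z₁+z₂)/2 = z }`. -/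
noncomputable def effJ (J1 J2 : ℝ → EReal) (z : ℝ) : EReal :=
  ⨅ p : {p : ℝ × ℝ // (p.1 + p.2) / 2 = z},
    J2 z + ((1 / 2 : ℝ) : EReal) * (J1 (p : ℝ × ℝ).1 + J1 (p : ℝ × ℝ).2)

/-- The lower convex envelope of an extended-real-valued function,
realized as the supremum of its affine minorants. -/
noncomputable def convEnv (f : ℝ → EReal) (z : ℝ) : EReal :=
  ⨆ ab : {ab : ℝ × ℝ // ∀ w : ℝ, ((ab.1 * w + ab.2 : ℝ) : EReal) ≤ f w},
    (((ab : ℝ × ℝ).1 * z + (ab : ℝ × ℝ).2 : ℝ) : EReal)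

/-- Hypotheses [H0]–[H5] on the interaction potentials `J₁`, `J₂` and the
effective potential `J₀ = effJ J₁ J₂`. -/
structure HypJ (J1 J2 : ℝ → EReal) (γ γc c : ℝ) : Prop where
  γc_pos : 0 < γc
  c_pos : 0 < c
  γ_pos : 0 < γ
  fin1 : ∀ z : ℝ, 0 < z → J1 z ≠ ⊤ ∧ J1 z ≠ ⊥
  fin2 : ∀ z : ℝ, 0 < z → J2 z ≠ ⊤ ∧ J2 z ≠ ⊥
  fin0 : ∀ z : ℝ, 0 < z → effJ J1 J2 z ≠ ⊤ ∧ effJ J1 J2 z ≠ ⊥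
  /-- [H0] strict convexity of `J₁` and `J₀` on `(0, γ^c + c)` -/
  h0_1 : StrictConvexOn ℝ (Ioo 0 (γc + c)) (fun z => (J1 z).toReal)
  h0_0 : StrictConvexOn ℝ (Ioo 0 (γc + c)) (fun z => (effJ J1 J2 z).toReal)
  /-- [H1] regularity -/
  h1_1 : ContDiffOn ℝ 2 (fun z => (J1 z).toReal) (Ioi 0)
  h1_2 : ContDiffOn ℝ 2 (fun z => (J2 z).toReal) (Ioi 0)
  h1_0 : ContDiffOn ℝ 2 (fun z => (effJ J1 J2 z).toReal) (Ioi 0)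
  /-- [H2] uniqueness of minimal energy configurations -/
  h2 : ∀ z ∈ Ioo (0 : ℝ) γc,
      effJ J1 J2 z = J2 z + ((1 / 2 : ℝ) : EReal) * (J1 z + J1 z) ∧
      ∀ z1 z2 : ℝ, (z1 + z2) / 2 = z →
        J2 z + ((1 / 2 : ℝ) : EReal) * (J1 z1 + J1 z2) = effJ J1 J2 z → z1 = z ∧ z2 = z
  /-- [H3] behaviour at infinity -/
  h3_1 : ∃ L : ℝ, Tendsto (fun z => (J1 z).toReal) atTop (nhds L)
  h3_2 : ∃ L : ℝ, Tendsto (fun z => (J2 z).toReal) atTop (nhds L)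
  h3_0 : ∃ L : ℝ, Tendsto (fun z => (effJ J1 J2 z).toReal) atTop (nhds L)
  /-- [H4] structure of `J₀` -/
  h4_lt : γ < γc
  h4_min : ∀ z : ℝ, effJ J1 J2 γ ≤ effJ J1 J2 z
  h4_unique : ∀ z : ℝ, effJ J1 J2 z = effJ J1 J2 γ → z = γ
  h4_gap : ∃ m : ℝ, effJ J1 J2 γ < (m : EReal) ∧ ∀ z : ℝ, γc ≤ z → (m : EReal) ≤ effJ J1 J2 z
  /-- [H5] singular behaviour at zero -/
  h5_1 : (∀ z : ℝ, z ≤ 0 → J1 z = ⊤) ∧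
      Tendsto (fun z => (J1 z).toReal) (nhdsWithin 0 (Ioi 0)) atTop
  h5_2 : (∀ z : ℝ, z ≤ 0 → J2 z = ⊤) ∧
      Tendsto (fun z => (J2 z).toReal) (nhdsWithin 0 (Ioi 0)) atTop

/-- Assumption 𝒜 : [H0]–[H5] together with [Φ1]. -/
structure AssumptionA (J1 J2 : ℝ → EReal) (Φ : ℝ → ℝ → ℝ) (γ γc c : ℝ)
    extends HypJ J1 J2 γ γc c : Prop where
  /-- [Φ1] the external potential is `C²` -/
  hΦ : ContDiff ℝ 2 (Function.uncurry Φ)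

/-- A function of bounded variation on `(-1,2)`, encoded through the decomposition
`Du = u' dx + D^s u` of its distributional derivative: `ac` is the density `u'` of the
absolutely continuous part and `Ds` is the singular part; `u` is the right-continuous
good representative `u(x) = Du((-1,x])`. -/
structure BVFun where
  u : ℝ → ℝ
  ac : ℝ → ℝ
  Ds : MeasureTheory.SignedMeasure ℝ
  ac_integrable : IntegrableOn ac (Ioo (-1 : ℝ) 2)
  singular : ∃ A : Set ℝ, MeasurableSet A ∧ volume A = 0 ∧
      ∀ B : Set ℝ, MeasurableSet B → B ∩ A = ∅ → Ds B = 0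
  repr : ∀ x ∈ Ico (-1 : ℝ) 2, u x = (∫ y in Ioc (-1 : ℝ) x, ac y) + Ds (Ioc (-1 : ℝ) x)

/-- `u ∈ BV^ℓ([0,1])` : `u ≡ 0` on `(-1,0)` and `u ≡ ℓ` on `(1,2)`. -/
def IsBVl (ℓ : ℝ) (v : BVFun) : Prop :=
  (∀ x ∈ Ioo (-1 : ℝ) 0, v.u x = 0) ∧ (∀ x ∈ Ioo (1 : ℝ) 2, v.u x = ℓ)

/-- Nonnegativity of the singular part `D^s u ≥ 0`. -/
def DsNonneg (v : BVFun) : Prop := ∀ B : Set ℝ, MeasurableSet B → 0 ≤ v.Ds B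

open Classical in
/-- The limit functional
`H(u) = ∫_0^1 J₀**(u') + Φ(x,u) dx` if `u ∈ BV^ℓ([0,1])` and `D^s u ≥ 0`, `+∞` else. -/
noncomputable def Hfun (J1 J2 : ℝ → EReal) (Φ : ℝ → ℝ → ℝ) (ℓ : ℝ) (v : BVFun) : EReal :=
  if IsBVl ℓ v ∧ DsNonneg v ∧
      (∀ᵐ x ∂(volume.restrict (Ioo (0 : ℝ) 1)), convEnv (effJ J1 J2) (v.ac x) ≠ ⊤) ∧
      IntegrableOn (fun x => (convEnv (effJ J1 J2) (v.ac x)).toReal + Φ x (v.u x)) (Ioo (0 : ℝ) 1)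
  then ((∫ x in Ioo (0 : ℝ) 1,
      ((convEnv (effJ J1 J2) (v.ac x)).toReal + Φ x (v.u x)) : ℝ) : EReal)
  else ⊤

/-- The limit functional, viewed on plain functions via the (a.e. unique) BV decomposition. -/
noncomputable def HfunOn (J1 J2 : ℝ → EReal) (Φ : ℝ → ℝ → ℝ) (ℓ : ℝ) (u : ℝ → ℝ) : EReal :=
  ⨅ v : {v : BVFun // ∀ᵐ x ∂(volume.restrict (Ioo (-1 : ℝ) 2)), (v : BVFun).u x = u x},
    Hfun J1 J2 Φ ℓ (v : BVFun)

/-- `u` is continuous on `[0,1]` and affine on each grid interval `(i/n, (i+1)/n)`. -/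
def IsPwAffine (n : ℕ) (u : ℝ → ℝ) : Prop :=
  ContinuousOn u (Icc (0 : ℝ) 1) ∧
  ∀ i : ℕ, i < n → ∀ x ∈ Icc ((i : ℝ) / n) (((i : ℝ) + 1) / n),
    u x = u ((i : ℝ) / n)
      + (n : ℝ) * (x - (i : ℝ) / n) * (u (((i : ℝ) + 1) / n) - u ((i : ℝ) / n))

/-- `u ∈ 𝒜ₙ^ℓ(0,1)` : piecewise affine with the boundary conditions [B0] and [B1]. -/
def IsAnl (n : ℕ) (ℓ θ0 θ1 : ℝ) (u : ℝ → ℝ) : Prop :=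
  IsPwAffine n u ∧ u 0 = 0 ∧ u 1 = ℓ ∧
    u (1 / n) = θ0 / n ∧ u (((n : ℝ) - 1) / n) = ℓ - θ1 / n

/-- The discrete energy `Hₙ`. -/
noncomputable def Hn (J1 J2 : ℝ → EReal) (Φ : ℝ → ℝ → ℝ) (n : ℕ) (u : ℝ → ℝ) : EReal :=
  (∑ i ∈ Finset.range n,
      ((1 / n : ℝ) : EReal) * J1 ((n : ℝ) * (u (((i : ℝ) + 1) / n) - u ((i : ℝ) / n))))
  + (∑ i ∈ Finset.range (n - 1),
      ((1 / n : ℝ) : EReal) * J2 ((n : ℝ) / 2 * (u (((i : ℝ) + 2) / n) - u ((i : ℝ) / n))))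
  + (((∑ i ∈ Finset.range (n + 1), (1 / n : ℝ) * Φ ((i : ℝ) / n) (u ((i : ℝ) / n))) : ℝ) : EReal)

open Classical in
/-- The discrete energy `Hₙ^ℓ`, `+∞` outside `𝒜ₙ^ℓ(0,1)`. -/
noncomputable def Hnl (J1 J2 : ℝ → EReal) (Φ : ℝ → ℝ → ℝ) (ℓ θ0 θ1 : ℝ) (n : ℕ)
    (u : ℝ → ℝ) : EReal :=
  if IsAnl n ℓ θ0 θ1 u then Hn J1 J2 Φ n u else ⊤

/-- `inf_u H(u)`. -/
noncomputable def infH (J1 J2 : ℝ → EReal) (Φ : ℝ → ℝ → ℝ) (ℓ : ℝ) : EReal :=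
  ⨅ v : BVFun, Hfun J1 J2 Φ ℓ v

/-- The rescaled energy `H_{1,n}^ℓ(u) = (Hₙ^ℓ(u) − inf H)/λₙ`. -/
noncomputable def H1n (J1 J2 : ℝ → EReal) (Φ : ℝ → ℝ → ℝ) (ℓ θ0 θ1 : ℝ) (n : ℕ)
    (u : ℝ → ℝ) : EReal :=
  ((n : ℝ) : EReal) * (Hnl J1 J2 Φ ℓ θ0 θ1 n u - infH J1 J2 Φ ℓ)

/-- Convergence in `L¹(0,1)`. -/
def L1conv (un : ℕ → ℝ → ℝ) (u : ℝ → ℝ) : Prop :=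
  (∀ n, IntegrableOn (fun x => un n x - u x) (Ioo (0 : ℝ) 1)) ∧
  Tendsto (fun n => ∫ x in Ioo (0 : ℝ) 1, |un n x - u x|) atTop (nhds 0)

private lemma clamp_close {a b t c : ℝ} (hc : c ∈ Icc a b) :
    |t - max a (min t b)| ≤ |t - c| := by
  obtain ⟨h1, h2⟩ := hc
  rcases le_total t a with h | h
  · rw [min_eq_left (h.trans (h1.trans h2)), max_eq_left h]
    rw [abs_of_nonpos (by linarith), abs_of_nonpos (by linarith)]; linarith
  · rcases le_total t b with h' | h'
    · rw [min_eq_left h', max_eq_right h, sub_self, abs_zero]; exact abs_nonneg _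
    · rw [min_eq_right h', max_eq_right (h1.trans h2)]
      rw [abs_of_nonneg (by linarith), abs_of_nonneg (by linarith)]; linarith

lemma riemann_est (Φ : ℝ → ℝ → ℝ) (hΦc : Continuous (Function.uncurry Φ))
    (ℓ : ℝ) (hℓ : 0 < ℓ) (L : NNReal)
    (hLip : LipschitzOnWith L (Function.uncurry Φ) (Icc ((0:ℝ),(0:ℝ)) (1,ℓ)))
    (n : ℕ) (hn : 1 ≤ n) (w : ℝ → ℝ)
    (hw : ContinuousOn w (Icc (0:ℝ) 1)) (hmono : MonotoneOn w (Icc (0:ℝ) 1))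
    (hw0 : w 0 = 0) (hw1 : w 1 = ℓ) :
    |(∑ i ∈ Finset.range (n+1), (1/n : ℝ) * Φ ((i:ℝ)/n) (w ((i:ℝ)/n)))
       - ∫ x in Ioo (0:ℝ) 1, Φ x (w x)| ≤ ((L:ℝ) * (1 + ℓ) + |Φ 1 ℓ|) / n := by
  have hn0 : (0:ℝ) < n := by exact_mod_cast hn
  have hmem : ∀ x ∈ Icc (0:ℝ) 1, w x ∈ Icc 0 ℓ := by
    intro x hx
    refine ⟨hw0 ▸ hmono (left_mem_Icc.2 zero_le_one) hx hx.1,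
      hw1 ▸ hmono hx (right_mem_Icc.2 zero_le_one) hx.2⟩
  have hmemK : ∀ x ∈ Icc (0:ℝ) 1, ((x, w x) : ℝ × ℝ) ∈ Icc ((0:ℝ),(0:ℝ)) (1,ℓ) := by
    intro x hx
    have := hmem x hx
    exact ⟨⟨hx.1, this.1⟩, ⟨hx.2, this.2⟩⟩
  have hgrid : ∀ i : ℕ, i ≤ n → (i:ℝ)/n ∈ Icc (0:ℝ) 1 := by
    intro i hi
    exact ⟨by positivity, by rw [div_le_one hn0]; exact_mod_cast hi⟩
  have hcont : ContinuousOn (fun x => Φ x (w x)) (Icc (0:ℝ) 1) :=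
    hΦc.comp_continuousOn (continuousOn_id.prodMk hw)
  have hle : ∀ i : ℕ, i < n → ((i:ℝ))/n ≤ ((i:ℝ)+1)/n := fun i _ =>
    div_le_div_of_nonneg_right (by linarith) hn0.le
  have hsub : ∀ i : ℕ, i < n → Icc ((i:ℝ)/n) (((i:ℝ)+1)/n) ⊆ Icc (0:ℝ) 1 := by
    intro i hi y hy
    refine ⟨le_trans (hgrid i hi.le).1 hy.1, le_trans hy.2 ?_⟩
    have := (hgrid (i+1) hi).2
    push_cast at this
    exact this
  have hInt : ∀ i : ℕ, i < n → IntervalIntegrable (fun x => Φ x (w x)) volume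
      ((i:ℝ)/n) (((i:ℝ)+1)/n) := by
    intro i hi
    exact (hcont.mono (by rw [uIcc_of_le (hle i hi)]; exact hsub i hi)).intervalIntegrable
  have hsplit : ∑ i ∈ Finset.range n, ∫ x in ((i:ℝ)/n)..(((i:ℝ)+1)/n), Φ x (w x)
      = ∫ x in (0:ℝ)..1, Φ x (w x) := by
    have h := intervalIntegral.sum_integral_adjacent_intervals (a := fun i : ℕ => (i:ℝ)/n)
      (n := n) (f := fun x => Φ x (w x)) (μ := volume) (fun k hk => by
        push_cast; exact hInt k hk)
    simp only [Nat.cast_zero, zero_div] at h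
    rw [div_self hn0.ne'] at h
    rw [← h]
    exact Finset.sum_congr rfl fun i _ => by push_cast; ring_nf
  have hIoo : ∫ x in Ioo (0:ℝ) 1, Φ x (w x) = ∫ x in (0:ℝ)..1, Φ x (w x) := by
    rw [intervalIntegral.integral_of_le zero_le_one, integral_Ioc_eq_integral_Ioo]
  let Δ : ℕ → ℝ := fun i => w (((i:ℝ)+1)/n) - w ((i:ℝ)/n)
  have hΔ0 : ∀ i : ℕ, i < n → 0 ≤ Δ i := by
    intro i hi
    have := hmono (hgrid i hi.le) (hsub i hi (right_mem_Icc.2 (hle i hi))) (hle i hi)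
    simpa [Δ] using sub_nonneg.2 this
  have htel : ∑ i ∈ Finset.range n, Δ i = ℓ := by
    have h := Finset.sum_range_sub (f := fun i : ℕ => w ((i:ℝ)/n)) n
    push_cast at h
    rw [div_self hn0.ne', zero_div, hw1, hw0, sub_zero] at h
    simpa [Δ] using h
  have hlen : ∀ i : ℕ, ((i:ℝ)+1)/n - (i:ℝ)/n = 1/n := by
    intro i; field_simp; ring
  have hterm : ∀ i : ℕ, i < n →
      |(1/n : ℝ) * Φ ((i:ℝ)/n) (w ((i:ℝ)/n))
          - ∫ x in ((i:ℝ)/n)..(((i:ℝ)+1)/n), Φ x (w x)|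
        ≤ (L:ℝ) * (1/n + Δ i) * (1/n) := by
    intro i hi
    have hconst : (1/n : ℝ) * Φ ((i:ℝ)/n) (w ((i:ℝ)/n))
        = ∫ _x in ((i:ℝ)/n)..(((i:ℝ)+1)/n), Φ ((i:ℝ)/n) (w ((i:ℝ)/n)) := by
      rw [intervalIntegral.integral_const, smul_eq_mul, hlen i]
    rw [hconst, ← intervalIntegral.integral_sub intervalIntegrable_const (hInt i hi)]
    have hb := intervalIntegral.norm_integral_le_of_norm_le_const
      (C := (L:ℝ)*(1/n + Δ i))
      (f := fun x => Φ ((i:ℝ)/n) (w ((i:ℝ)/n)) - Φ x (w x))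
      (a := (i:ℝ)/n) (b := ((i:ℝ)+1)/n) ?_
    · rw [Real.norm_eq_abs] at hb
      rw [hlen i, abs_of_nonneg (by positivity : (0:ℝ) ≤ 1/(n:ℝ))] at hb
      exact hb
    · intro x hx
      rw [Set.uIoc_of_le (hle i hi)] at hx
      have hxI : x ∈ Icc (0:ℝ) 1 := hsub i hi ⟨hx.1.le, hx.2⟩
      have hd := hLip.dist_le_mul (((i:ℝ)/n, w ((i:ℝ)/n)) : ℝ × ℝ)
        (hmemK _ (hgrid i hi.le)) ((x, w x) : ℝ × ℝ) (hmemK x hxI)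
      have hdist : dist ((((i:ℝ)/n, w ((i:ℝ)/n))) : ℝ × ℝ) ((x, w x) : ℝ × ℝ)
          ≤ 1/n + Δ i := by
        rw [Prod.dist_eq]
        dsimp only
        apply max_le
        · rw [Real.dist_eq, abs_of_nonpos (by linarith [hx.1])]
          have h2 : x ≤ ((i:ℝ)+1)/n := hx.2
          have h3 := hlen i
          have h4 := hΔ0 i hi
          simp only [Δ] at h4 ⊢
          linarith
        · rw [Real.dist_eq]
          have hm1 : w ((i:ℝ)/n) ≤ w x := hmono (hgrid i hi.le) hxI hx.1.le
          have hm2 : w x ≤ w (((i:ℝ)+1)/n) :=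
            hmono hxI (hsub i hi (right_mem_Icc.2 (hle i hi))) hx.2
          rw [abs_of_nonpos (by linarith)]
          have h5 : (0:ℝ) ≤ 1/n := by positivity
          simp only [Δ]
          linarith
      rw [Real.norm_eq_abs]
      calc |Φ ((i:ℝ)/n) (w ((i:ℝ)/n)) - Φ x (w x)|
          = dist (Function.uncurry Φ (((i:ℝ)/n, w ((i:ℝ)/n)) : ℝ × ℝ))
              (Function.uncurry Φ ((x, w x) : ℝ × ℝ)) := by
            rw [Real.dist_eq]; rfl
        _ ≤ (L:ℝ) * dist ((((i:ℝ)/n, w ((i:ℝ)/n))) : ℝ × ℝ) ((x, w x) : ℝ × ℝ) := hd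
        _ ≤ (L:ℝ) * (1/n + Δ i) := mul_le_mul_of_nonneg_left hdist L.coe_nonneg
  -- assemble
  rw [hIoo, ← hsplit, Finset.sum_range_succ]
  rw [div_self hn0.ne', hw1]
  set A := ∑ i ∈ Finset.range n, (1/n : ℝ) * Φ ((i:ℝ)/n) (w ((i:ℝ)/n)) with hA
  set B := ∑ i ∈ Finset.range n, ∫ x in ((i:ℝ)/n)..(((i:ℝ)+1)/n), Φ x (w x) with hB
  have hAB : |A - B| ≤ ∑ i ∈ Finset.range n, (L:ℝ)*(1/n + Δ i)*(1/n) := by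
    rw [hA, hB, ← Finset.sum_sub_distrib]
    exact (Finset.abs_sum_le_sum_abs _ _).trans
      (Finset.sum_le_sum fun i hi => hterm i (Finset.mem_range.1 hi))
  have h2 : ∑ i ∈ Finset.range n, (L:ℝ)*(1/n + Δ i)*(1/n) = (L:ℝ)*(1+ℓ)/n := by
    have h3 : ∑ i ∈ Finset.range n, (L:ℝ)*(1/n + Δ i)*(1/n)
        = (L:ℝ)*(1/n) * ∑ i ∈ Finset.range n, (1/n + Δ i) := by
      rw [Finset.mul_sum]
      exact Finset.sum_congr rfl fun i _ => by ring
    rw [h3, Finset.sum_add_distrib, htel, Finset.sum_const, Finset.card_range, nsmul_eq_mul]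
    field_simp
  calc |A + 1/(n:ℝ) * Φ 1 ℓ - B| = |(A - B) + 1/(n:ℝ) * Φ 1 ℓ| := by ring_nf
    _ ≤ |A - B| + |1/(n:ℝ) * Φ 1 ℓ| := abs_add_le _ _
    _ ≤ (L:ℝ)*(1+ℓ)/n + |Φ 1 ℓ|/n := by
        refine add_le_add (h2 ▸ hAB) ?_
        rw [abs_mul, abs_of_nonneg (by positivity : (0:ℝ) ≤ 1/(n:ℝ))]
        ring_nf
        exact le_rfl
    _ = ((L:ℝ) * (1 + ℓ) + |Φ 1 ℓ|) / n := by ring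

/-- Convergence of the Riemann sums of the force term along a
sequence of nondecreasing piecewise affine configurations converging in `L¹(0,1)`. -/
theorem force_riemann_sums_converge
    (Φ : ℝ → ℝ → ℝ) (hΦ : ContDiff ℝ 2 (Function.uncurry Φ))
    (ℓ : ℝ) (hℓ : 0 < ℓ)
    (un : ℕ → ℝ → ℝ) (u : ℝ → ℝ)
    (haff : ∀ n, IsPwAffine n (un n))
    (hmono : ∀ n, MonotoneOn (un n) (Icc (0 : ℝ) 1))
    (h0 : ∀ n, un n 0 = 0) (h1 : ∀ n, un n 1 = ℓ)
    (hu : IntegrableOn u (Ioo (0 : ℝ) 1))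
    (hconv : Tendsto (fun n => ∫ x in Ioo (0 : ℝ) 1, |un n x - u x|) atTop (nhds 0)) :
    Tendsto (fun n => ∑ i ∈ Finset.range (n + 1),
        (1 / n : ℝ) * Φ ((i : ℝ) / n) (un n ((i : ℝ) / n)))
      atTop (nhds (∫ x in Ioo (0 : ℝ) 1, Φ x (u x))) := by
  -- Lipschitz constant for Φ on K = [0,1] × [0,ℓ]
  have hΦ1 : ContDiff ℝ 1 (Function.uncurry Φ) := hΦ.of_le (by norm_num)
  have hΦc : Continuous (Function.uncurry Φ) := hΦ1.continuous
  obtain ⟨L, hLip⟩ : ∃ L : NNReal,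
      LipschitzOnWith L (Function.uncurry Φ) (Icc ((0:ℝ),(0:ℝ)) (1,ℓ)) := by
    have hcf : Continuous fun p => fderiv ℝ (Function.uncurry Φ) p :=
      hΦ1.continuous_fderiv one_ne_zero
    obtain ⟨M, hM⟩ := (isCompact_Icc (α := ℝ × ℝ)).exists_bound_of_continuousOn hcf.continuousOn
    refine ⟨⟨max M 0, le_max_right _ _⟩, ?_⟩
    refine (convex_Icc _ _).lipschitzOnWith_of_nnnorm_fderiv_le
      (fun x _ => hΦ1.differentiable one_ne_zero x) (fun x hx => ?_)
    have := hM x hx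
    exact NNReal.coe_le_coe.1 (by exact this.trans (le_max_left _ _))
  obtain ⟨B, hB⟩ := (isCompact_Icc (α := ℝ × ℝ)).exists_bound_of_continuousOn
    (s := Icc ((0:ℝ),(0:ℝ)) (1,ℓ)) hΦc.continuousOn
  -- the truncation v of u
  set v : ℝ → ℝ := fun x => max 0 (min (u x) ℓ) with hv
  have hvmeas : AEStronglyMeasurable v (volume.restrict (Ioo (0:ℝ) 1)) :=
    (continuous_const.max (continuous_id.min continuous_const)).comp_aestronglyMeasurable
      hu.aestronglyMeasurable
  have hvmem : ∀ x, v x ∈ Icc (0:ℝ) ℓ := fun x =>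
    ⟨le_max_left _ _, max_le hℓ.le (min_le_right _ _)⟩
  have hwmem : ∀ n, ∀ x ∈ Icc (0:ℝ) 1, un n x ∈ Icc 0 ℓ := by
    intro n x hx
    exact ⟨(h0 n) ▸ hmono n (left_mem_Icc.2 zero_le_one) hx hx.1,
      (h1 n) ▸ hmono n hx (right_mem_Icc.2 zero_le_one) hx.2⟩
  have hunint : ∀ n, IntegrableOn (un n) (Ioo (0:ℝ) 1) := fun n =>
    ((haff n).1.integrableOn_Icc).mono_set Ioo_subset_Icc_self
  have hvint : IntegrableOn v (Ioo (0:ℝ) 1) := by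
    refine Integrable.mono' (integrable_const ℓ) hvmeas ?_
    filter_upwards with x
    rw [Real.norm_eq_abs, abs_of_nonneg (hvmem x).1]
    exact (hvmem x).2
  have hgint : IntegrableOn (fun x => |u x - v x|) (Ioo (0:ℝ) 1) := (hu.sub hvint).abs
  -- u = v a.e. on (0,1)
  have huv : u =ᵐ[volume.restrict (Ioo (0:ℝ) 1)] v := by
    have key0 : ∀ n, ∫ x in Ioo (0:ℝ) 1, |u x - v x| ≤ ∫ x in Ioo (0:ℝ) 1, |un n x - u x| := by
      intro n
      refine setIntegral_mono_on hgint ((hunint n).sub hu).abs measurableSet_Ioo ?_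
      intro x hx
      calc |u x - v x| ≤ |u x - un n x| :=
            clamp_close (hwmem n x (Ioo_subset_Icc_self hx))
        _ = |un n x - u x| := abs_sub_comm _ _
    have hle0 : ∫ x in Ioo (0:ℝ) 1, |u x - v x| ≤ 0 := ge_of_tendsto' hconv key0
    have heq0 : ∫ x in Ioo (0:ℝ) 1, |u x - v x| = 0 :=
      le_antisymm hle0 (integral_nonneg fun x => abs_nonneg _)
    have := (integral_eq_zero_iff_of_nonneg
      (fun x => abs_nonneg (u x - v x)) hgint).mp heq0
    filter_upwards [this] with x hx
    have : |u x - v x| = 0 := hx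
    rw [abs_eq_zero, sub_eq_zero] at this
    exact this
  have hT : ∫ x in Ioo (0:ℝ) 1, Φ x (u x) = ∫ x in Ioo (0:ℝ) 1, Φ x (v x) :=
    integral_congr_ae (huv.mono fun x hx => by simp only [hx])
  -- integrability of Φ(·, v ·) and Φ(·, un n ·)
  have hΦv_meas : AEStronglyMeasurable (fun x => Φ x (v x))
      (volume.restrict (Ioo (0:ℝ) 1)) :=
    hΦc.comp_aestronglyMeasurable (aestronglyMeasurable_id.prodMk hvmeas)
  have hΦv_int : IntegrableOn (fun x => Φ x (v x)) (Ioo (0:ℝ) 1) := by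
    refine Integrable.mono' (integrable_const B) hΦv_meas ?_
    filter_upwards [ae_restrict_mem measurableSet_Ioo] with x hx
    have hxI : x ∈ Icc (0:ℝ) 1 := Ioo_subset_Icc_self hx
    exact hB (x, v x) ⟨⟨hxI.1, (hvmem x).1⟩, ⟨hxI.2, (hvmem x).2⟩⟩
  have hΦun_int : ∀ n, IntegrableOn (fun x => Φ x (un n x)) (Ioo (0:ℝ) 1) := fun n =>
    ((hΦc.comp_continuousOn (continuousOn_id.prodMk (haff n).1)).integrableOn_Icc).mono_set
      Ioo_subset_Icc_self
  -- second estimate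
  have key2 : ∀ n, |(∫ x in Ioo (0:ℝ) 1, Φ x (un n x)) - ∫ x in Ioo (0:ℝ) 1, Φ x (v x)|
      ≤ (L:ℝ) * ∫ x in Ioo (0:ℝ) 1, |un n x - u x| := by
    intro n
    rw [← integral_sub (hΦun_int n) hΦv_int]
    have hpt : ∀ᵐ x ∂(volume.restrict (Ioo (0:ℝ) 1)),
        |Φ x (un n x) - Φ x (v x)| ≤ (L:ℝ) * |un n x - u x| := by
      filter_upwards [huv, ae_restrict_mem measurableSet_Ioo] with x hxv hx
      have hxI : x ∈ Icc (0:ℝ) 1 := Ioo_subset_Icc_self hx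
      have hd := hLip.dist_le_mul ((x, un n x) : ℝ × ℝ)
        ⟨⟨hxI.1, (hwmem n x hxI).1⟩, ⟨hxI.2, (hwmem n x hxI).2⟩⟩
        ((x, v x) : ℝ × ℝ) ⟨⟨hxI.1, (hvmem x).1⟩, ⟨hxI.2, (hvmem x).2⟩⟩
      have hdd : dist ((x, un n x) : ℝ × ℝ) ((x, v x) : ℝ × ℝ) = |un n x - u x| := by
        rw [Prod.dist_eq]
        dsimp only
        rw [dist_self, Real.dist_eq, hxv]
        exact max_eq_right (abs_nonneg _)
      calc |Φ x (un n x) - Φ x (v x)|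
          = dist (Function.uncurry Φ ((x, un n x) : ℝ × ℝ))
              (Function.uncurry Φ ((x, v x) : ℝ × ℝ)) := by rw [Real.dist_eq]; rfl
        _ ≤ (L:ℝ) * dist ((x, un n x) : ℝ × ℝ) ((x, v x) : ℝ × ℝ) := hd
        _ = (L:ℝ) * |un n x - u x| := by rw [hdd]
    calc |∫ x in Ioo (0:ℝ) 1, (Φ x (un n x) - Φ x (v x))|
        ≤ ∫ x in Ioo (0:ℝ) 1, |Φ x (un n x) - Φ x (v x)| := by
          simpa [Real.norm_eq_abs] using
            norm_integral_le_integral_norm (μ := volume.restrict (Ioo (0:ℝ) 1))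
              (f := fun x => Φ x (un n x) - Φ x (v x))
      _ ≤ ∫ x in Ioo (0:ℝ) 1, (L:ℝ) * |un n x - u x| := by
          refine integral_mono_ae ((hΦun_int n).sub hΦv_int).abs
            (((hunint n).sub hu).abs.const_mul _) hpt
      _ = (L:ℝ) * ∫ x in Ioo (0:ℝ) 1, |un n x - u x| := integral_const_mul _ _
  -- conclusion
  rw [← tendsto_sub_nhds_zero_iff]
  apply squeeze_zero_norm'
    (a := fun n : ℕ => ((L:ℝ) * (1 + ℓ) + |Φ 1 ℓ|)/n
      + (L:ℝ) * ∫ x in Ioo (0:ℝ) 1, |un n x - u x|)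
  · filter_upwards [eventually_ge_atTop 1] with n hn
    rw [Real.norm_eq_abs, hT]
    have e1 := riemann_est Φ hΦc ℓ hℓ L hLip n hn (un n) (haff n).1 (hmono n) (h0 n) (h1 n)
    have e2 := key2 n
    set S := ∑ i ∈ Finset.range (n + 1), (1 / n : ℝ) * Φ ((i : ℝ) / n) (un n ((i : ℝ) / n))
    calc |S - ∫ x in Ioo (0:ℝ) 1, Φ x (v x)|
        = |(S - ∫ x in Ioo (0:ℝ) 1, Φ x (un n x))
            + ((∫ x in Ioo (0:ℝ) 1, Φ x (un n x)) - ∫ x in Ioo (0:ℝ) 1, Φ x (v x))| := by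
          ring_nf
      _ ≤ |S - ∫ x in Ioo (0:ℝ) 1, Φ x (un n x)|
            + |(∫ x in Ioo (0:ℝ) 1, Φ x (un n x)) - ∫ x in Ioo (0:ℝ) 1, Φ x (v x)| :=
          abs_add_le _ _
      _ ≤ ((L:ℝ) * (1 + ℓ) + |Φ 1 ℓ|)/n
            + (L:ℝ) * ∫ x in Ioo (0:ℝ) 1, |un n x - u x| := add_le_add e1 e2
  · have t1 : Tendsto (fun n : ℕ => ((L:ℝ) * (1 + ℓ) + |Φ 1 ℓ|)/n) atTop (nhds 0) :=
      tendsto_const_div_atTop_nhds_zero_nat _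
    have t2 := hconv.const_mul (L:ℝ)
    simpa using t1.add t2
end
end

section
/- Suppose Assumption 𝒜 is satisfied and fix ℓ > 0. Let u ∈ BV^ℓ([0,1]) be a minimizer of H and let S_u denote its jump set. If x_0 ∈ S_u ∩ (0,1), then Φ(x_0, u(x_0−)) = Φ(x_0, u(x_0+)) = min_{w ∈ [u(x_0−), u(x_0+)]} Φ(x_0, w). If 0 ∈ S_u then Φ(0, u(0+)) = min_{w ∈ [u(0−), u(0+)]} Φ(0, w), and if 1 ∈ S_u then Φ(1, u(1−)) = min_{w ∈ [u(1−), u(1+)]} Φ(1, w). -/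
open MeasureTheory Set Filter Topology

noncomputable section

namespace JumpAux

lemma convEnv_le (f : ℝ → EReal) (z : ℝ) : convEnv f z ≤ f z :=
  iSup_le fun ab => ab.2 z

lemma zero_le_univ {v : BVFun} (hD : DsNonneg v) : 0 ≤[Set.univ] v.Ds :=
  VectorMeasure.restrict_le_restrict_of_subset_le _ _ fun j hj _ => by
    simpa using hD j hj

/-- The positive measure associated to the nonnegative singular part. -/
noncomputable def muD (v : BVFun) (hD : DsNonneg v) : Measure ℝ :=
  v.Ds.toMeasureOfZeroLE Set.univ MeasurableSet.univ (zero_le_univ hD)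

instance muD_finite (v : BVFun) (hD : DsNonneg v) : IsFiniteMeasure (muD v hD) := by
  unfold muD; infer_instance

lemma muD_apply {v : BVFun} (hD : DsNonneg v) {B : Set ℝ} (hB : MeasurableSet B) :
    (muD v hD B).toReal = v.Ds B := by
  rw [muD, SignedMeasure.toMeasureOfZeroLE_apply _ _ _ hB]
  simp [Set.univ_inter]

lemma Ds_mono {v : BVFun} (hD : DsNonneg v) {A B : Set ℝ} (hA : MeasurableSet A)
    (hB : MeasurableSet B) (hAB : A ⊆ B) : v.Ds A ≤ v.Ds B := by
  have h1 := VectorMeasure.of_add_of_diff (v := v.Ds) hA hB hAB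
  have h2 := hD (B \ A) (hB.diff hA)
  linarith

lemma tendsto_G_right {v : BVFun} (hD : DsNonneg v) (x0 : ℝ) :
    Tendsto (fun x => v.Ds (Ioc (-1) x)) (𝓝[>] x0) (𝓝 (v.Ds (Ioc (-1) x0))) := by
  set G : ℝ → ℝ := fun x => v.Ds (Ioc (-1) x) with hG
  have hmono : Monotone G := fun a b hab =>
    Ds_mono hD measurableSet_Ioc measurableSet_Ioc (Ioc_subset_Ioc_right hab)
  have h1 := hmono.tendsto_nhdsGT x0
  have hseq : Tendsto (fun n : ℕ => G (x0 + 1 / (n + 1))) atTop (𝓝 (G x0)) := by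
    have hInter : (⋂ n : ℕ, Ioc (-1:ℝ) (x0 + 1 / (n + 1))) = Ioc (-1) x0 := by
      ext y
      simp only [mem_iInter, mem_Ioc]
      constructor
      · rintro h
        refine ⟨(h 0).1, ?_⟩
        by_contra hy
        push_neg at hy
        obtain ⟨n, hn⟩ := exists_nat_one_div_lt (sub_pos.2 hy)
        have := (h n).2
        have : y ≤ x0 + 1 / (n + 1) := this
        nlinarith [hn]
      · rintro ⟨h1, h2⟩ n
        have : (0:ℝ) < 1 / (n + 1) := by positivity
        exact ⟨h1, by linarith⟩
    have hmeas := tendsto_measure_iInter_atTop (μ := muD v hD)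
      (s := fun n : ℕ => Ioc (-1:ℝ) (x0 + 1 / (n + 1)))
      (fun n => measurableSet_Ioc.nullMeasurableSet)
      (fun n m hnm => Ioc_subset_Ioc_right (by
        have hn : (0:ℝ) < (n:ℝ) + 1 := by positivity
        have hm : (0:ℝ) < (m:ℝ) + 1 := by positivity
        have : (n:ℝ) ≤ m := Nat.cast_le.2 hnm
        have : 1 / ((m:ℝ) + 1) ≤ 1 / ((n:ℝ) + 1) := by
          apply one_div_le_one_div_of_le hn; linarith
        linarith))
      ⟨0, measure_ne_top _ _⟩
    rw [hInter] at hmeas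
    have := (ENNReal.tendsto_toReal (measure_ne_top _ _)).comp hmeas
    simp only [Function.comp_def] at this
    convert this using 2 with n
    · exact (muD_apply hD measurableSet_Ioc).symm
    · exact (muD_apply hD measurableSet_Ioc).symm
  have key : sInf (G '' Ioi x0) = G x0 := by
    apply le_antisymm
    · refine ge_of_tendsto hseq (Eventually.of_forall fun n => ?_)
      apply csInf_le
      · exact ⟨G x0, by rintro _ ⟨x, hx, rfl⟩; exact hmono (le_of_lt hx)⟩
      · exact ⟨x0 + 1 / (n + 1), by simp; positivity, rfl⟩
    · refine le_csInf (by exact ⟨G (x0 + 1), ⟨x0 + 1, by simp, rfl⟩⟩) ?_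
      rintro _ ⟨x, hx, rfl⟩
      exact hmono (le_of_lt hx)
  rwa [key] at h1

lemma tendsto_G_left {v : BVFun} (hD : DsNonneg v) {x0 : ℝ} (hx0 : (-1:ℝ) < x0) :
    Tendsto (fun x => v.Ds (Ioc (-1) x)) (𝓝[<] x0)
      (𝓝 (v.Ds (Ioc (-1) x0) - v.Ds {x0})) := by
  set G : ℝ → ℝ := fun x => v.Ds (Ioc (-1) x) with hG
  have hmono : Monotone G := fun a b hab =>
    Ds_mono hD measurableSet_Ioc measurableSet_Ioc (Ioc_subset_Ioc_right hab)
  have h1 := hmono.tendsto_nhdsLT x0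
  have hsplit : v.Ds (Ioc (-1) x0) = v.Ds (Ioo (-1) x0) + v.Ds {x0} := by
    have hdisj : Disjoint (Ioo (-1:ℝ) x0) {x0} := by
      simp [disjoint_singleton_right]
    have hun : Ioo (-1:ℝ) x0 ∪ {x0} = Ioc (-1) x0 := by
      exact Ioo_union_right hx0
    rw [← hun, VectorMeasure.of_union hdisj measurableSet_Ioo (measurableSet_singleton _)]
  have hseq : Tendsto (fun n : ℕ => G (x0 - 1 / (n + 1))) atTop (𝓝 (v.Ds (Ioo (-1) x0))) := by
    have hUnion : (⋃ n : ℕ, Ioc (-1:ℝ) (x0 - 1 / (n + 1))) = Ioo (-1) x0 := by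
      ext y
      simp only [mem_iUnion, mem_Ioc, mem_Ioo]
      constructor
      · rintro ⟨n, h1, h2⟩
        have : (0:ℝ) < 1 / (n + 1) := by positivity
        exact ⟨h1, by linarith⟩
      · rintro ⟨h1, h2⟩
        obtain ⟨n, hn⟩ := exists_nat_one_div_lt (sub_pos.2 h2)
        exact ⟨n, h1, by nlinarith [hn]⟩
    have hmeas := tendsto_measure_iUnion_atTop (μ := muD v hD)
      (s := fun n : ℕ => Ioc (-1:ℝ) (x0 - 1 / (n + 1)))
      (fun n m hnm => Ioc_subset_Ioc_right (by
        have hn : (0:ℝ) < (n:ℝ) + 1 := by positivity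
        have : (n:ℝ) ≤ m := Nat.cast_le.2 hnm
        have : 1 / ((m:ℝ) + 1) ≤ 1 / ((n:ℝ) + 1) := by
          apply one_div_le_one_div_of_le hn; linarith
        linarith))
    rw [hUnion] at hmeas
    have := (ENNReal.tendsto_toReal (measure_ne_top _ _)).comp hmeas
    simp only [Function.comp_def] at this
    convert this using 2 with n
    · exact (muD_apply hD measurableSet_Ioc).symm
    · exact (muD_apply hD measurableSet_Ioo).symm
  have key : sSup (G '' Iio x0) = v.Ds (Ioo (-1) x0) := by
    apply le_antisymm
    · refine csSup_le (⟨G (x0 - 1), ⟨x0 - 1, by simp, rfl⟩⟩) ?_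
      rintro _ ⟨x, hx, rfl⟩
      exact Ds_mono hD measurableSet_Ioc measurableSet_Ioo
        (fun y hy => ⟨hy.1, lt_of_le_of_lt hy.2 hx⟩)
    · refine le_of_tendsto hseq (Eventually.of_forall fun n => ?_)
      apply le_csSup
      · exact ⟨v.Ds (Ioo (-1) x0), by
          rintro _ ⟨x, hx, rfl⟩
          exact Ds_mono hD measurableSet_Ioc measurableSet_Ioo
            (fun y hy => ⟨hy.1, lt_of_le_of_lt hy.2 hx⟩)⟩
      · exact ⟨x0 - 1 / (n + 1), by simp; positivity, rfl⟩
  rw [key] at h1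
  rw [hsplit]
  convert h1 using 2
  ring

end JumpAux
namespace JumpAux

lemma ac_int_Icc (v : BVFun) : IntegrableOn v.ac (Icc (-1:ℝ) (3/2)) := by
  have h : IntegrableOn v.ac (Ioo (-1:ℝ) (3/2)) :=
    v.ac_integrable.mono_set (Ioo_subset_Ioo le_rfl (by norm_num))
  rwa [integrableOn_Icc_iff_integrableOn_Ioo]

lemma tendsto_u_right {v : BVFun} (hD : DsNonneg v) {x0 : ℝ} (hx0 : x0 ∈ Icc (0:ℝ) 1) :
    Tendsto v.u (𝓝[>] x0) (𝓝 (v.u x0)) := by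
  set F : ℝ → ℝ := fun x => ∫ t in Ioc (-1:ℝ) x, v.ac t with hF
  have hFc : ContinuousOn F (Icc (-1) (3/2)) :=
    intervalIntegral.continuousOn_primitive (ac_int_Icc v)
  have hx0m : x0 ∈ Icc (-1:ℝ) (3/2) := ⟨by linarith [hx0.1], by linarith [hx0.2]⟩
  have hlt : x0 < 3/2 := by linarith [hx0.2]
  have hFt : Tendsto F (𝓝[>] x0) (𝓝 (F x0)) := by
    have h1 : Tendsto F (𝓝[Icc (-1:ℝ) (3/2)] x0) (𝓝 (F x0)) := hFc x0 hx0m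
    refine h1.mono_left ?_
    rw [← nhdsWithin_Ioo_eq_nhdsGT hlt]
    exact nhdsWithin_mono _ (Ioo_subset_Icc_self.trans (Icc_subset_Icc (by linarith [hx0.1]) le_rfl))
  have hGt := tendsto_G_right hD x0
  have hsum := hFt.add hGt
  have hrepr : v.u x0 = F x0 + v.Ds (Ioc (-1) x0) :=
    v.repr x0 ⟨by linarith [hx0.1], by linarith [hx0.2]⟩
  rw [← hrepr] at hsum
  refine Tendsto.congr' ?_ hsum
  filter_upwards [Ioo_mem_nhdsGT_of_mem (⟨le_rfl, hlt⟩ : x0 ∈ Ico x0 (3/2))] with x hx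
  exact (v.repr x ⟨by linarith [hx.1, hx0.1], by linarith [hx.2]⟩).symm

lemma tendsto_u_left {v : BVFun} (hD : DsNonneg v) {x0 : ℝ} (hx0 : x0 ∈ Icc (0:ℝ) 1) :
    Tendsto v.u (𝓝[<] x0) (𝓝 (v.u x0 - v.Ds {x0})) := by
  set F : ℝ → ℝ := fun x => ∫ t in Ioc (-1:ℝ) x, v.ac t with hF
  have hFc : ContinuousOn F (Icc (-1) (3/2)) :=
    intervalIntegral.continuousOn_primitive (ac_int_Icc v)
  have hx0m : x0 ∈ Icc (-1:ℝ) (3/2) := ⟨by linarith [hx0.1], by linarith [hx0.2]⟩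
  have hgt : (-1:ℝ) < x0 := by linarith [hx0.1]
  have hFt : Tendsto F (𝓝[<] x0) (𝓝 (F x0)) := by
    have h1 : Tendsto F (𝓝[Icc (-1:ℝ) (3/2)] x0) (𝓝 (F x0)) := hFc x0 hx0m
    refine h1.mono_left ?_
    rw [← nhdsWithin_Ioo_eq_nhdsLT hgt]
    exact nhdsWithin_mono _ (Ioo_subset_Icc_self.trans (Icc_subset_Icc le_rfl (by linarith [hx0.2])))
  have hGt := tendsto_G_left hD hgt
  have hsum := hFt.add hGt
  have hrepr : v.u x0 = F x0 + v.Ds (Ioc (-1) x0) :=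
    v.repr x0 ⟨by linarith, by linarith [hx0.2]⟩
  have : F x0 + (v.Ds (Ioc (-1) x0) - v.Ds {x0}) = v.u x0 - v.Ds {x0} := by
    rw [hrepr]; ring
  rw [this] at hsum
  refine Tendsto.congr' ?_ hsum
  filter_upwards [Ioo_mem_nhdsLT_of_mem (⟨hgt, le_rfl⟩ : x0 ∈ Ioc (-1) x0)] with x hx
  exact (v.repr x ⟨by linarith [hx.1], by linarith [hx.2, hx0.2]⟩).symm

/-- a uniform bound for `v.u` on `(0,1)`. -/
lemma u_bound {v : BVFun} (hD : DsNonneg v) :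
    ∃ K : ℝ, ∀ x ∈ Ioo (0:ℝ) 1, |v.u x| ≤ K := by
  set K1 : ℝ := ∫ t in Ioo (-1:ℝ) 2, ‖v.ac t‖ with hK1
  set K2 : ℝ := v.Ds (Ioc (-1:ℝ) 1)
  refine ⟨K1 + K2, fun x hx => ?_⟩
  have hxm : x ∈ Ico (-1:ℝ) 2 := ⟨by linarith [hx.1], by linarith [hx.2]⟩
  rw [v.repr x hxm]
  have habs : |∫ t in Ioc (-1:ℝ) x, v.ac t| ≤ K1 := by
    have h1 : ‖∫ t in Ioc (-1:ℝ) x, v.ac t‖ ≤ ∫ t in Ioc (-1:ℝ) x, ‖v.ac t‖ :=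
      norm_integral_le_integral_norm _
    have hsub : Ioc (-1:ℝ) x ⊆ Ioo (-1:ℝ) 2 :=
      fun y hy => ⟨hy.1, by linarith [hy.2, hx.2]⟩
    have h2 : (∫ t in Ioc (-1:ℝ) x, ‖v.ac t‖) ≤ K1 := by
      rw [hK1]
      refine setIntegral_mono_set v.ac_integrable.norm ?_ hsub.eventuallyLE
      exact Eventually.of_forall fun y => norm_nonneg _
    calc |∫ t in Ioc (-1:ℝ) x, v.ac t| ≤ _ := h1
    _ ≤ K1 := h2
  have hG1 : (0:ℝ) ≤ v.Ds (Ioc (-1) x) := hD _ measurableSet_Ioc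
  have hG2 : v.Ds (Ioc (-1) x) ≤ K2 :=
    Ds_mono hD measurableSet_Ioc measurableSet_Ioc (Ioc_subset_Ioc_right (le_of_lt hx.2))
  have := abs_le.1 habs
  rw [abs_le]
  constructor <;> nlinarith

/-- `v.u` is a.e. measurable on `(0,1)`. -/
lemma u_aemeasurable (v : BVFun) (hD : DsNonneg v) :
    AEMeasurable v.u (volume.restrict (Ioo (0:ℝ) 1)) := by
  set F : ℝ → ℝ := fun x => ∫ t in Ioc (-1:ℝ) x, v.ac t with hF
  have hFc : ContinuousOn F (Icc (-1) (3/2)) :=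
    intervalIntegral.continuousOn_primitive (ac_int_Icc v)
  have hFm : AEMeasurable F (volume.restrict (Ioo (0:ℝ) 1)) := by
    refine ContinuousOn.aemeasurable (hFc.mono ?_) measurableSet_Ioo
    intro y hy; exact ⟨by linarith [hy.1], by linarith [hy.2]⟩
  have hGmono : Monotone (fun x => v.Ds (Ioc (-1) x)) := fun a b hab =>
    Ds_mono hD measurableSet_Ioc measurableSet_Ioc (Ioc_subset_Ioc_right hab)
  have hGm : AEMeasurable (fun x => v.Ds (Ioc (-1) x)) (volume.restrict (Ioo (0:ℝ) 1)) :=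
    hGmono.measurable.aemeasurable
  refine (hFm.add hGm).congr ?_
  refine (ae_restrict_of_forall_mem measurableSet_Ioo fun x hx => ?_)
  exact (v.repr x ⟨by linarith [hx.1], by linarith [hx.2]⟩).symm

/-- integrability of `Φ(x, g x)` for bounded a.e. measurable `g`. -/
lemma phi_integrable (Φ : ℝ → ℝ → ℝ) (hΦ : Continuous (Function.uncurry Φ))
    {g : ℝ → ℝ} (hg : AEMeasurable g (volume.restrict (Ioo (0:ℝ) 1)))
    {K : ℝ} (hK : ∀ x ∈ Ioo (0:ℝ) 1, |g x| ≤ K) :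
    IntegrableOn (fun x => Φ x (g x)) (Ioo (0:ℝ) 1) := by
  have hsm : AEStronglyMeasurable (fun x => Φ x (g x)) (volume.restrict (Ioo (0:ℝ) 1)) := by
    have : AEMeasurable (fun x => (x, g x)) (volume.restrict (Ioo (0:ℝ) 1)) :=
      aemeasurable_id.prodMk hg
    exact (hΦ.measurable.comp_aemeasurable this).aestronglyMeasurable
  obtain ⟨M, hM⟩ := (isCompact_Icc.prod isCompact_Icc).exists_bound_of_continuousOn
    (s := Icc (0:ℝ) 1 ×ˢ Icc (-K) K) hΦ.continuousOn
  refine Integrable.mono' (g := fun _ => M) (integrableOn_const (by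
    rw [Real.volume_Ioo]; exact ENNReal.ofReal_ne_top)) hsm ?_
  refine ae_restrict_of_forall_mem measurableSet_Ioo fun x hx => ?_
  have h1 := hK x hx
  have h2 := abs_le.1 h1
  exact hM (x, g x) ⟨⟨le_of_lt hx.1, le_of_lt hx.2⟩, ⟨h2.1, h2.2⟩⟩

end JumpAux
namespace JumpAux

/-- the affine competitor with finite energy. -/
lemma exists_finite (J1 J2 : ℝ → EReal) (Φ : ℝ → ℝ → ℝ) (γ γc c : ℝ)
    (hJ : HypJ J1 J2 γ γc c) (hΦ : Continuous (Function.uncurry Φ)) {ℓ : ℝ} (hℓ : 0 < ℓ) :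
    ∃ w : BVFun, Hfun J1 J2 Φ ℓ w ≠ ⊤ := by
  classical
  set u0 : ℝ → ℝ := fun x => max (min x 1) 0 * ℓ with hu0
  set ac0 : ℝ → ℝ := (Ioc (0:ℝ) 1).indicator (fun _ => ℓ) with hac0
  have hrepr : ∀ x ∈ Ico (-1:ℝ) 2, u0 x = (∫ y in Ioc (-1:ℝ) x, ac0 y) + (0 : SignedMeasure ℝ) (Ioc (-1) x) := by
    intro x _
    have h1 : (∫ y in Ioc (-1:ℝ) x, ac0 y) = ∫ y in Ioc (-1:ℝ) x ∩ Ioc 0 1, ℓ := by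
      rw [hac0, setIntegral_indicator measurableSet_Ioc]
    have h2 : Ioc (-1:ℝ) x ∩ Ioc 0 1 = Ioc 0 (min x 1) := by
      rw [Ioc_inter_Ioc]; norm_num
    have h3 : (∫ y in Ioc (0:ℝ) (min x 1), (ℓ:ℝ)) = max (min x 1) 0 * ℓ := by
      rw [setIntegral_const, measureReal_def, Real.volume_Ioc, smul_eq_mul]
      rw [ENNReal.toReal_ofReal']
      norm_num
    simp only [VectorMeasure.coe_zero, Pi.zero_apply, add_zero]
    rw [h1, h2, h3]
  set w : BVFun :=
    { u := u0
      ac := ac0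
      Ds := 0
      ac_integrable := by
        refine Integrable.indicator ?_ measurableSet_Ioc
        exact integrableOn_const (by rw [Real.volume_Ioo]; exact ENNReal.ofReal_ne_top)
      singular := ⟨∅, MeasurableSet.empty, measure_empty, fun B _ _ => by simp⟩
      repr := hrepr } with hw
  refine ⟨w, ?_⟩
  have hcond : IsBVl ℓ w ∧ DsNonneg w ∧
      (∀ᵐ x ∂(volume.restrict (Ioo (0 : ℝ) 1)), convEnv (effJ J1 J2) (w.ac x) ≠ ⊤) ∧
      IntegrableOn (fun x => (convEnv (effJ J1 J2) (w.ac x)).toReal + Φ x (w.u x)) (Ioo (0 : ℝ) 1) := by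
    refine ⟨⟨fun x hx => ?_, fun x hx => ?_⟩, fun B _ => by show (0:ℝ) ≤ (0 : SignedMeasure ℝ) B; simp, ?_, ?_⟩
    · show max (min x 1) 0 * ℓ = 0
      have : min x 1 ≤ 0 := le_trans (min_le_left _ _) (le_of_lt hx.2)
      rw [max_eq_right this, zero_mul]
    · show max (min x 1) 0 * ℓ = ℓ
      have : min x 1 = 1 := min_eq_right (le_of_lt hx.1)
      rw [this, max_eq_left (by norm_num), one_mul]
    · refine ae_restrict_of_forall_mem measurableSet_Ioo fun x hx => ?_
      have hx' : w.ac x = ℓ := by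
        show ac0 x = ℓ
        rw [hac0, indicator_of_mem (show x ∈ Ioc (0:ℝ) 1 from ⟨hx.1, le_of_lt hx.2⟩)]
      rw [hx']
      exact fun htop => (hJ.fin0 ℓ hℓ).1 (top_le_iff.1 (htop ▸ convEnv_le (effJ J1 J2) ℓ))
    · have hcont : Continuous u0 :=
        ((continuous_id.min continuous_const).max continuous_const).mul continuous_const
      have hint : IntegrableOn (fun x => (convEnv (effJ J1 J2) ℓ).toReal + Φ x (u0 x)) (Ioo (0:ℝ) 1) := by
        have hc2 : Continuous (fun x => (convEnv (effJ J1 J2) ℓ).toReal + Φ x (u0 x)) := by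
          have h3 : Continuous (fun x : ℝ => Φ x (u0 x)) := hΦ.comp (continuous_id.prodMk hcont)
          exact continuous_const.add h3
        exact (hc2.integrableOn_Icc (a := (0:ℝ)) (b := 1) (μ := volume)).mono_set
          Ioo_subset_Icc_self
      refine hint.congr_fun (fun x hx => ?_) measurableSet_Ioo
      have hx' : w.ac x = ℓ := by
        show ac0 x = ℓ
        rw [hac0, indicator_of_mem (show x ∈ Ioc (0:ℝ) 1 from ⟨hx.1, le_of_lt hx.2⟩)]
      rw [hx']
  rw [Hfun, if_pos hcond]
  exact EReal.coe_ne_top _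

lemma minimizer_conditions (J1 J2 : ℝ → EReal) (Φ : ℝ → ℝ → ℝ) (γ γc c : ℝ)
    (hJ : HypJ J1 J2 γ γc c) (hΦ : Continuous (Function.uncurry Φ)) {ℓ : ℝ} (hℓ : 0 < ℓ)
    (v : BVFun) (hmin : ∀ w : BVFun, Hfun J1 J2 Φ ℓ v ≤ Hfun J1 J2 Φ ℓ w) :
    IsBVl ℓ v ∧ DsNonneg v ∧
      (∀ᵐ x ∂(volume.restrict (Ioo (0 : ℝ) 1)), convEnv (effJ J1 J2) (v.ac x) ≠ ⊤) ∧
      IntegrableOn (fun x => (convEnv (effJ J1 J2) (v.ac x)).toReal + Φ x (v.u x)) (Ioo (0 : ℝ) 1) := by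
  classical
  obtain ⟨w, hw⟩ := exists_finite J1 J2 Φ γ γc c hJ hΦ hℓ
  by_contra hc
  have : Hfun J1 J2 Φ ℓ v = ⊤ := by rw [Hfun, if_neg hc]
  rw [this] at hmin
  exact hw (top_le_iff.1 (hmin w))

end JumpAux
namespace JumpAux

lemma g_integrable (Φ : ℝ → ℝ → ℝ) (hΦ : Continuous (Function.uncurry Φ))
    (v : BVFun) (hD : DsNonneg v) (cc : ℝ) :
    IntegrableOn (fun x => Φ x (v.u x + cc) - Φ x (v.u x)) (Ioo (0:ℝ) 1) := by
  obtain ⟨K, hK⟩ := u_bound hD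
  have hum := u_aemeasurable v hD
  have h1 : IntegrableOn (fun x => Φ x (v.u x + cc)) (Ioo (0:ℝ) 1) := by
    refine phi_integrable Φ hΦ (hum.add aemeasurable_const) (K := K + |cc|) fun x hx => ?_
    calc |v.u x + cc| ≤ |v.u x| + |cc| := abs_add_le _ _
    _ ≤ K + |cc| := by linarith [hK x hx]
  have h2 : IntegrableOn (fun x => Φ x (v.u x)) (Ioo (0:ℝ) 1) := by
    refine phi_integrable Φ hΦ hum (K := K + |cc|) fun x hx => ?_
    linarith [hK x hx, abs_nonneg cc]
  exact h1.sub h2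

lemma master (J1 J2 : ℝ → EReal) (Φ : ℝ → ℝ → ℝ) {ℓ : ℝ}
    (hΦ : Continuous (Function.uncurry Φ))
    (v : BVFun)
    (hmin : ∀ w : BVFun, Hfun J1 J2 Φ ℓ v ≤ Hfun J1 J2 Φ ℓ w)
    (hbv : IsBVl ℓ v) (hD : DsNonneg v)
    (hae : ∀ᵐ x ∂(volume.restrict (Ioo (0 : ℝ) 1)), convEnv (effJ J1 J2) (v.ac x) ≠ ⊤)
    (hint : IntegrableOn
      (fun x => (convEnv (effJ J1 J2) (v.ac x)).toReal + Φ x (v.u x)) (Ioo (0 : ℝ) 1))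
    (s t cc : ℝ) (hs : 0 ≤ s) (hst : s < t) (ht : t ≤ 1)
    (hc : (0 ≤ cc ∧ cc ≤ v.Ds {t}) ∨ (cc ≤ 0 ∧ -cc ≤ v.Ds {s})) :
    0 ≤ ∫ x in Ioo s t, (Φ x (v.u x + cc) - Φ x (v.u x)) := by
  classical
  have hs' : (-1:ℝ) < s := by linarith
  have ht' : (-1:ℝ) < t := by linarith
  set u' : ℝ → ℝ := fun x => v.u x + (Ico s t).indicator (fun _ => cc) x with hu'
  set D' : SignedMeasure ℝ := v.Ds + cc • (Measure.dirac s).toSignedMeasure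
      - cc • (Measure.dirac t).toSignedMeasure with hD'
  have happ : ∀ B : Set ℝ, MeasurableSet B →
      D' B = v.Ds B + (if s ∈ B then cc else 0) - (if t ∈ B then cc else 0) := by
    intro B hB
    rw [hD', VectorMeasure.sub_apply, VectorMeasure.add_apply, VectorMeasure.smul_apply,
      VectorMeasure.smul_apply, Measure.toSignedMeasure_apply_measurable hB,
      Measure.toSignedMeasure_apply_measurable hB, measureReal_def, measureReal_def,
      Measure.dirac_apply' _ hB,
      Measure.dirac_apply' _ hB]
    by_cases h1 : s ∈ B <;> by_cases h2 : t ∈ B <;>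
      simp [h1, h2, smul_eq_mul]
  have hDB : ∀ (B : Set ℝ), MeasurableSet B → ∀ (x0 : ℝ), x0 ∈ B → v.Ds {x0} ≤ v.Ds B := by
    intro B hB x0 hx0
    have h1 := VectorMeasure.of_add_of_diff (v := v.Ds) (measurableSet_singleton x0) hB
      (singleton_subset_iff.2 hx0)
    have h2 := hD (B \ {x0}) (hB.diff (measurableSet_singleton x0))
    linarith
  have hval : ∀ x : ℝ, (Ico s t).indicator (fun _ => cc) x
      = (if s ≤ x then cc else 0) - (if t ≤ x then cc else 0) := by
    intro x
    by_cases hxs : s ≤ x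
    · by_cases hxt : t ≤ x
      · rw [if_pos hxs, if_pos hxt,
          indicator_of_notMem (fun h : x ∈ Ico s t => absurd h.2 (not_lt.2 hxt))]
        ring
      · rw [if_pos hxs, if_neg hxt, indicator_of_mem (mem_Ico.2 ⟨hxs, lt_of_not_ge hxt⟩)]
        ring
    · have hxt : ¬ t ≤ x := fun h => hxs (le_trans (le_of_lt hst) h)
      rw [if_neg hxs, if_neg hxt, indicator_of_notMem (fun h : x ∈ Ico s t => hxs h.1)]
      ring
  have hrepr' : ∀ x ∈ Ico (-1:ℝ) 2, u' x = (∫ y in Ioc (-1:ℝ) x, v.ac y) + D' (Ioc (-1) x) := by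
    intro x hx
    rw [happ _ measurableSet_Ioc]
    have e1 : (s ∈ Ioc (-1:ℝ) x) = (s ≤ x) := by simp [mem_Ioc, hs']
    have e2 : (t ∈ Ioc (-1:ℝ) x) = (t ≤ x) := by simp [mem_Ioc, ht']
    simp only [e1, e2]
    have hrepr := v.repr x hx
    simp only [hu']
    rw [hval x, hrepr]
    ring
  obtain ⟨A, hA, hA0, h0A⟩ := v.singular
  set w' : BVFun :=
    { u := u'
      ac := v.ac
      Ds := D'
      ac_integrable := v.ac_integrable
      singular := by
        refine ⟨A ∪ {s} ∪ {t}, (hA.union (measurableSet_singleton s)).union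
          (measurableSet_singleton t), ?_, ?_⟩
        · rw [measure_union_null_iff]
          refine ⟨measure_union_null_iff.2 ⟨hA0, Real.volume_singleton⟩, Real.volume_singleton⟩
        · intro B hB hBint
          have hBA : B ∩ A = ∅ := by
            rw [eq_empty_iff_forall_notMem] at hBint ⊢
            intro y hy
            exact hBint y ⟨hy.1, Or.inl (Or.inl hy.2)⟩
          have hsB : s ∉ B := by
            intro hsB
            rw [eq_empty_iff_forall_notMem] at hBint
            exact hBint s ⟨hsB, Or.inl (Or.inr rfl)⟩
          have htB : t ∉ B := by
            intro htB
            rw [eq_empty_iff_forall_notMem] at hBint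
            exact hBint t ⟨htB, Or.inr rfl⟩
          rw [happ B hB, h0A B hB hBA, if_neg hsB, if_neg htB]
          ring
      repr := hrepr' } with hw'
  have hDw' : DsNonneg w' := by
    intro B hB
    show 0 ≤ D' B
    rw [happ B hB]
    have h0 := hD B hB
    rcases hc with ⟨h1, h2⟩ | ⟨h1, h2⟩
    · by_cases htB : t ∈ B
      · have h3 := hDB B hB t htB
        by_cases hsB : s ∈ B
        · rw [if_pos hsB, if_pos htB]; linarith
        · rw [if_neg hsB, if_pos htB]; linarith
      · by_cases hsB : s ∈ B
        · rw [if_pos hsB, if_neg htB]; linarith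
        · rw [if_neg hsB, if_neg htB]; linarith
    · by_cases hsB : s ∈ B
      · have h3 := hDB B hB s hsB
        by_cases htB : t ∈ B
        · rw [if_pos hsB, if_pos htB]; linarith
        · rw [if_pos hsB, if_neg htB]; linarith
      · by_cases htB : t ∈ B
        · have h4 := hD {t} (measurableSet_singleton t)
          have h3 := hDB B hB t htB
          rw [if_neg hsB, if_pos htB]
          -- Ds B ≥ Ds {t} ≥ 0 ; need Ds B - cc*[t∈B] ≥ 0 with cc ≤ 0: -cc ≥ 0 so -if = -cc ≥ 0
          linarith
        · rw [if_neg hsB, if_neg htB]; linarith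
  have hbv' : IsBVl ℓ w' := by
    constructor
    · intro x hx
      show u' x = 0
      rw [hu']
      simp only
      rw [indicator_of_notMem (fun h : x ∈ Ico s t => absurd (le_trans hs h.1) (not_le.2 hx.2)),
        add_zero]
      exact hbv.1 x hx
    · intro x hx
      show u' x = ℓ
      rw [hu']
      simp only
      rw [indicator_of_notMem (fun h : x ∈ Ico s t => absurd (lt_of_lt_of_le h.2 ht)
        (not_lt.2 (le_of_lt hx.1))), add_zero]
      exact hbv.2 x hx
  -- integrability facts
  obtain ⟨K, hK⟩ := u_bound hD
  have hum := u_aemeasurable v hD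
  have hu'm : AEMeasurable u' (volume.restrict (Ioo (0:ℝ) 1)) :=
    hum.add ((measurable_const.indicator measurableSet_Ico).aemeasurable)
  have hindb : ∀ x : ℝ, |(Ico s t).indicator (fun _ => cc) x| ≤ |cc| := by
    intro x
    by_cases h : x ∈ Ico s t <;> simp [h, abs_nonneg]
  have hPu : IntegrableOn (fun x => Φ x (v.u x)) (Ioo (0:ℝ) 1) := by
    refine phi_integrable Φ hΦ hum (K := K) fun x hx => hK x hx
  have hPu' : IntegrableOn (fun x => Φ x (u' x)) (Ioo (0:ℝ) 1) := by
    refine phi_integrable Φ hΦ hu'm (K := K + |cc|) fun x hx => ?_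
    calc |u' x| ≤ |v.u x| + |(Ico s t).indicator (fun _ => cc) x| := abs_add_le _ _
    _ ≤ K + |cc| := add_le_add (hK x hx) (hindb x)
  have hC : IntegrableOn (fun x => (convEnv (effJ J1 J2) (v.ac x)).toReal) (Ioo (0:ℝ) 1) := by
    have h := hint.sub hPu
    refine h.congr (Eventually.of_forall fun x => ?_)
    simp only [Pi.sub_apply]
    ring
  have hint' : IntegrableOn
      (fun x => (convEnv (effJ J1 J2) (w'.ac x)).toReal + Φ x (w'.u x)) (Ioo (0:ℝ) 1) :=
    hC.add hPu'
  -- the energy comparison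
  have hHv : Hfun J1 J2 Φ ℓ v = ((∫ x in Ioo (0:ℝ) 1,
      ((convEnv (effJ J1 J2) (v.ac x)).toReal + Φ x (v.u x)) : ℝ) : EReal) := by
    rw [Hfun, if_pos ⟨hbv, hD, hae, hint⟩]
  have hHw : Hfun J1 J2 Φ ℓ w' = ((∫ x in Ioo (0:ℝ) 1,
      ((convEnv (effJ J1 J2) (w'.ac x)).toReal + Φ x (w'.u x)) : ℝ) : EReal) := by
    rw [Hfun, if_pos ⟨hbv', hDw', hae, hint'⟩]
  have hle := hmin w'
  rw [hHv, hHw] at hle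
  have hle' : (∫ x in Ioo (0:ℝ) 1, ((convEnv (effJ J1 J2) (v.ac x)).toReal + Φ x (v.u x)))
      ≤ ∫ x in Ioo (0:ℝ) 1, ((convEnv (effJ J1 J2) (w'.ac x)).toReal + Φ x (w'.u x)) :=
    EReal.coe_le_coe_iff.1 hle
  have hwu : ∀ x : ℝ, w'.u x = u' x := fun _ => rfl
  have hwac : ∀ x : ℝ, w'.ac x = v.ac x := fun _ => rfl
  simp only [hwu, hwac] at hle'
  rw [integral_add hC hPu, integral_add hC hPu'] at hle'
  have h2 : (∫ x in Ioo (0:ℝ) 1, Φ x (v.u x)) ≤ ∫ x in Ioo (0:ℝ) 1, Φ x (u' x) :=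
    le_of_add_le_add_left hle'
  have h3 : 0 ≤ ∫ x in Ioo (0:ℝ) 1, (Φ x (u' x) - Φ x (v.u x)) := by
    rw [integral_sub hPu' hPu]
    linarith
  have h4 : (fun x => Φ x (u' x) - Φ x (v.u x))
      = (Ico s t).indicator (fun x => Φ x (v.u x + cc) - Φ x (v.u x)) := by
    funext x
    by_cases h : x ∈ Ico s t
    · rw [indicator_of_mem h, hu']
      simp only [indicator_of_mem h]
    · rw [indicator_of_notMem h, hu']
      simp only [indicator_of_notMem h, add_zero, sub_self]
  rw [h4, setIntegral_indicator measurableSet_Ico] at h3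
  have hsets : (Ioo (0:ℝ) 1 ∩ Ico s t : Set ℝ) =ᵐ[volume] (Ioo s t : Set ℝ) := by
    have hsing : {x : ℝ | ¬ x ≠ s} = {s} := by ext y; simp [not_not]
    have hns : ∀ᵐ x : ℝ, x ≠ s := by
      rw [ae_iff, hsing]; exact Real.volume_singleton
    filter_upwards [hns] with x hxs
    simp only [mem_inter_iff, mem_Ioo, mem_Ico, eq_iff_iff]
    constructor
    · rintro ⟨⟨hx0, hx1⟩, hsx, hxt⟩
      exact ⟨lt_of_le_of_ne hsx (Ne.symm hxs), hxt⟩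
    · rintro ⟨h1', h2'⟩
      exact ⟨⟨lt_of_le_of_lt hs h1', lt_of_lt_of_le h2' ht⟩, le_of_lt h1', h2'⟩
  rwa [setIntegral_congr_set hsets] at h3

end JumpAux
namespace JumpAux

lemma nonneg_of_right (g : ℝ → ℝ) (x0 δ0 L : ℝ) (hδ0 : 0 < δ0)
    (hint : IntegrableOn g (Ioo x0 (x0 + δ0)))
    (hg : Tendsto g (𝓝[>] x0) (𝓝 L))
    (H : ∀ δ : ℝ, 0 < δ → δ < δ0 → 0 ≤ ∫ x in Ioo x0 (x0 + δ), g x) : 0 ≤ L := by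
  by_contra hL
  push_neg at hL
  have hev : ∀ᶠ x in 𝓝[>] x0, g x < L / 2 :=
    hg.eventually_lt_const (by linarith)
  rw [eventually_iff, mem_nhdsGT_iff_exists_Ioo_subset] at hev
  obtain ⟨u, hu, hsub⟩ := hev
  set δ : ℝ := min (u - x0) δ0 / 2 with hδ
  have hupos : 0 < u - x0 := sub_pos.2 hu
  have hδpos : 0 < δ := by
    rw [hδ]; positivity
  have hδlt : δ < δ0 := by
    rw [hδ]
    have : min (u - x0) δ0 ≤ δ0 := min_le_right _ _
    linarith
  have hδu : x0 + δ ≤ u := by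
    have : min (u - x0) δ0 ≤ u - x0 := min_le_left _ _
    rw [hδ]; linarith
  have hmono : (∫ x in Ioo x0 (x0 + δ), g x) ≤ ∫ x in Ioo x0 (x0 + δ), (L / 2 : ℝ) := by
    refine setIntegral_mono_on (hint.mono_set (Ioo_subset_Ioo le_rfl (by linarith)))
      (integrableOn_const (by rw [Real.volume_Ioo]; exact ENNReal.ofReal_ne_top))
      measurableSet_Ioo ?_
    intro x hx
    exact le_of_lt (hsub ⟨hx.1, lt_of_lt_of_le hx.2 hδu⟩)
  rw [setIntegral_const, measureReal_def, Real.volume_Ioo, smul_eq_mul] at hmono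
  have hvol : (ENNReal.ofReal (x0 + δ - x0)).toReal = δ := by
    rw [ENNReal.toReal_ofReal (by linarith)]; ring
  rw [hvol] at hmono
  have h0 := H δ hδpos hδlt
  nlinarith

lemma nonneg_of_left (g : ℝ → ℝ) (x0 δ0 L : ℝ) (hδ0 : 0 < δ0)
    (hint : IntegrableOn g (Ioo (x0 - δ0) x0))
    (hg : Tendsto g (𝓝[<] x0) (𝓝 L))
    (H : ∀ δ : ℝ, 0 < δ → δ < δ0 → 0 ≤ ∫ x in Ioo (x0 - δ) x0, g x) : 0 ≤ L := by
  by_contra hL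
  push_neg at hL
  have hev : ∀ᶠ x in 𝓝[<] x0, g x < L / 2 :=
    hg.eventually_lt_const (by linarith)
  rw [eventually_iff, mem_nhdsLT_iff_exists_Ioo_subset] at hev
  obtain ⟨u, hu, hsub⟩ := hev
  set δ : ℝ := min (x0 - u) δ0 / 2 with hδ
  have hupos : 0 < x0 - u := sub_pos.2 hu
  have hδpos : 0 < δ := by rw [hδ]; positivity
  have hδlt : δ < δ0 := by
    rw [hδ]
    have : min (x0 - u) δ0 ≤ δ0 := min_le_right _ _
    linarith
  have hδu : u ≤ x0 - δ := by
    have : min (x0 - u) δ0 ≤ x0 - u := min_le_left _ _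
    rw [hδ]; linarith
  have hmono : (∫ x in Ioo (x0 - δ) x0, g x) ≤ ∫ x in Ioo (x0 - δ) x0, (L / 2 : ℝ) := by
    refine setIntegral_mono_on (hint.mono_set (Ioo_subset_Ioo (by linarith) le_rfl))
      (integrableOn_const (by rw [Real.volume_Ioo]; exact ENNReal.ofReal_ne_top))
      measurableSet_Ioo ?_
    intro x hx
    exact le_of_lt (hsub ⟨lt_of_le_of_lt hδu hx.1, hx.2⟩)
  rw [setIntegral_const, measureReal_def, Real.volume_Ioo, smul_eq_mul] at hmono
  have hvol : (ENNReal.ofReal (x0 - (x0 - δ))).toReal = δ := by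
    rw [show x0 - (x0 - δ) = δ by ring, ENNReal.toReal_ofReal (by linarith)]
  rw [hvol] at hmono
  have h0 := H δ hδpos hδlt
  nlinarith

/-- the right variation: at a point `x0 ∈ [0,1)`, moving (part of) the jump to the right. -/
lemma right_variation (J1 J2 : ℝ → EReal) (Φ : ℝ → ℝ → ℝ) {ℓ : ℝ}
    (hΦ : Continuous (Function.uncurry Φ)) (v : BVFun)
    (hmin : ∀ w : BVFun, Hfun J1 J2 Φ ℓ v ≤ Hfun J1 J2 Φ ℓ w)
    (hbv : IsBVl ℓ v) (hD : DsNonneg v)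
    (hae : ∀ᵐ x ∂(volume.restrict (Ioo (0 : ℝ) 1)), convEnv (effJ J1 J2) (v.ac x) ≠ ⊤)
    (hint : IntegrableOn
      (fun x => (convEnv (effJ J1 J2) (v.ac x)).toReal + Φ x (v.u x)) (Ioo (0 : ℝ) 1))
    {x0 : ℝ} (hx0 : 0 ≤ x0) (hx1 : x0 < 1)
    {cc : ℝ} (hcn : cc ≤ 0) (hcj : -cc ≤ v.Ds {x0}) :
    Φ x0 (v.u x0) ≤ Φ x0 (v.u x0 + cc) := by
  have hx0icc : x0 ∈ Icc (0:ℝ) 1 := ⟨hx0, le_of_lt hx1⟩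
  have htR := tendsto_u_right hD hx0icc
  set g : ℝ → ℝ := fun x => Φ x (v.u x + cc) - Φ x (v.u x) with hg
  have hid : Tendsto (fun x : ℝ => x) (𝓝[>] x0) (𝓝 x0) :=
    tendsto_id.mono_left nhdsWithin_le_nhds
  have hgt : Tendsto g (𝓝[>] x0) (𝓝 (Φ x0 (v.u x0 + cc) - Φ x0 (v.u x0))) := by
    have h1 : Tendsto (fun x => Φ x (v.u x + cc)) (𝓝[>] x0) (𝓝 (Φ x0 (v.u x0 + cc))) := by
      have hp : Tendsto (fun x : ℝ => (x, v.u x + cc)) (𝓝[>] x0) (𝓝 (x0, v.u x0 + cc)) :=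
        hid.prodMk_nhds (htR.add_const cc)
      exact (hΦ.tendsto (x0, v.u x0 + cc)).comp hp
    have h2 : Tendsto (fun x => Φ x (v.u x)) (𝓝[>] x0) (𝓝 (Φ x0 (v.u x0))) := by
      have hp : Tendsto (fun x : ℝ => (x, v.u x)) (𝓝[>] x0) (𝓝 (x0, v.u x0)) :=
        hid.prodMk_nhds htR
      exact (hΦ.tendsto (x0, v.u x0)).comp hp
    exact h1.sub h2
  have hkey : 0 ≤ Φ x0 (v.u x0 + cc) - Φ x0 (v.u x0) := by
    refine nonneg_of_right g x0 (1 - x0) _ (by linarith) ?_ hgt ?_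
    · have := (g_integrable Φ hΦ v hD cc).mono_set
        (Ioo_subset_Ioo hx0 (by linarith) : Ioo x0 (x0 + (1 - x0)) ⊆ Ioo (0:ℝ) 1)
      exact this
    · intro δ hδ hδ1
      have := master J1 J2 Φ hΦ v hmin hbv hD hae hint x0 (x0 + δ) cc hx0
        (by linarith) (by linarith) (Or.inr ⟨hcn, hcj⟩)
      exact this
  linarith

/-- the left variation: at a point `x0 ∈ (0,1]`, moving (part of) the jump to the left. -/
lemma left_variation (J1 J2 : ℝ → EReal) (Φ : ℝ → ℝ → ℝ) {ℓ : ℝ}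
    (hΦ : Continuous (Function.uncurry Φ)) (v : BVFun)
    (hmin : ∀ w : BVFun, Hfun J1 J2 Φ ℓ v ≤ Hfun J1 J2 Φ ℓ w)
    (hbv : IsBVl ℓ v) (hD : DsNonneg v)
    (hae : ∀ᵐ x ∂(volume.restrict (Ioo (0 : ℝ) 1)), convEnv (effJ J1 J2) (v.ac x) ≠ ⊤)
    (hint : IntegrableOn
      (fun x => (convEnv (effJ J1 J2) (v.ac x)).toReal + Φ x (v.u x)) (Ioo (0 : ℝ) 1))
    {x0 : ℝ} (hx0 : 0 < x0) (hx1 : x0 ≤ 1)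
    {cc : ℝ} (hcn : 0 ≤ cc) (hcj : cc ≤ v.Ds {x0}) :
    Φ x0 (v.u x0 - v.Ds {x0}) ≤ Φ x0 (v.u x0 - v.Ds {x0} + cc) := by
  have hx0icc : x0 ∈ Icc (0:ℝ) 1 := ⟨le_of_lt hx0, hx1⟩
  have htL := tendsto_u_left hD hx0icc
  set lv : ℝ := v.u x0 - v.Ds {x0} with hlv
  set g : ℝ → ℝ := fun x => Φ x (v.u x + cc) - Φ x (v.u x) with hg
  have hid : Tendsto (fun x : ℝ => x) (𝓝[<] x0) (𝓝 x0) :=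
    tendsto_id.mono_left nhdsWithin_le_nhds
  have hgt : Tendsto g (𝓝[<] x0) (𝓝 (Φ x0 (lv + cc) - Φ x0 lv)) := by
    have h1 : Tendsto (fun x => Φ x (v.u x + cc)) (𝓝[<] x0) (𝓝 (Φ x0 (lv + cc))) := by
      have hp : Tendsto (fun x : ℝ => (x, v.u x + cc)) (𝓝[<] x0) (𝓝 (x0, lv + cc)) :=
        hid.prodMk_nhds (htL.add_const cc)
      exact (hΦ.tendsto (x0, lv + cc)).comp hp
    have h2 : Tendsto (fun x => Φ x (v.u x)) (𝓝[<] x0) (𝓝 (Φ x0 lv)) := by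
      have hp : Tendsto (fun x : ℝ => (x, v.u x)) (𝓝[<] x0) (𝓝 (x0, lv)) :=
        hid.prodMk_nhds htL
      exact (hΦ.tendsto (x0, lv)).comp hp
    exact h1.sub h2
  have hkey : 0 ≤ Φ x0 (lv + cc) - Φ x0 lv := by
    refine nonneg_of_left g x0 x0 _ hx0 ?_ hgt ?_
    · have : Ioo (x0 - x0) x0 ⊆ Ioo (0:ℝ) 1 := by
        rw [sub_self]
        exact Ioo_subset_Ioo le_rfl hx1
      exact (g_integrable Φ hΦ v hD cc).mono_set this
    · intro δ hδ hδ1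
      have := master J1 J2 Φ hΦ v hmin hbv hD hae hint (x0 - δ) x0 cc (by linarith)
        (by linarith) hx1 (Or.inl ⟨hcn, hcj⟩)
      exact this
  linarith

end JumpAux
/-- Behaviour of `Φ` at the jump points of a minimizer `u` of `H`:
at an interior jump point `x₀ ∈ S_u ∩ (0,1)`,
`Φ(x₀,u(x₀−)) = Φ(x₀,u(x₀+)) = min_{w ∈ [u(x₀−),u(x₀+)]} Φ(x₀,w)`,
while at boundary jumps `Φ(0,u(0+))` resp. `Φ(1,u(1−))` realize the corresponding minima. -/
theorem jump_condition
    (J1 J2 : ℝ → EReal) (Φ : ℝ → ℝ → ℝ) (γ γc c : ℝ)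
    (hA : AssumptionA J1 J2 Φ γ γc c) (ℓ : ℝ) (hℓ : 0 < ℓ)
    (v : BVFun) (hbv : IsBVl ℓ v)
    (hmin : ∀ w : BVFun, Hfun J1 J2 Φ ℓ v ≤ Hfun J1 J2 Φ ℓ w) :
    (∀ x0 ∈ Ioo (0 : ℝ) 1, Function.leftLim v.u x0 ≠ Function.rightLim v.u x0 →
        Φ x0 (Function.leftLim v.u x0) = Φ x0 (Function.rightLim v.u x0) ∧
        ∀ w ∈ Icc (Function.leftLim v.u x0) (Function.rightLim v.u x0),
          Φ x0 (Function.leftLim v.u x0) ≤ Φ x0 w) ∧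
    (Function.leftLim v.u 0 ≠ Function.rightLim v.u 0 →
        ∀ w ∈ Icc (Function.leftLim v.u 0) (Function.rightLim v.u 0),
          Φ 0 (Function.rightLim v.u 0) ≤ Φ 0 w) ∧
    (Function.leftLim v.u 1 ≠ Function.rightLim v.u 1 →
        ∀ w ∈ Icc (Function.leftLim v.u 1) (Function.rightLim v.u 1),
          Φ 1 (Function.leftLim v.u 1) ≤ Φ 1 w) := by
  classical
  have hΦc : Continuous (Function.uncurry Φ) := hA.hΦ.continuous
  obtain ⟨hbv', hD, hae, hint⟩ :=
    JumpAux.minimizer_conditions J1 J2 Φ γ γc c hA.toHypJ hΦc hℓ v hmin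
  have hlim : ∀ x0 ∈ Icc (0:ℝ) 1,
      Function.rightLim v.u x0 = v.u x0 ∧
        Function.leftLim v.u x0 = v.u x0 - v.Ds {x0} := by
    intro x0 hx0
    constructor
    · exact rightLim_eq_of_tendsto
        (JumpAux.tendsto_u_right hD hx0)
    · exact leftLim_eq_of_tendsto
        (JumpAux.tendsto_u_left hD hx0)
  refine ⟨?_, ?_, ?_⟩
  · intro x0 hx0 hne
    obtain ⟨hr, hl⟩ := hlim x0 ⟨le_of_lt hx0.1, le_of_lt hx0.2⟩
    rw [hl, hr]
    have hjm : 0 ≤ v.Ds {x0} := hD {x0} (measurableSet_singleton x0)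
    have hLm : ∀ w ∈ Icc (v.u x0 - v.Ds {x0}) (v.u x0), Φ x0 (v.u x0 - v.Ds {x0}) ≤ Φ x0 w := by
      intro w hw
      have h := JumpAux.left_variation J1 J2 Φ hΦc v hmin hbv' hD hae hint hx0.1
        (le_of_lt hx0.2) (cc := w - (v.u x0 - v.Ds {x0})) (by linarith [hw.1])
        (by linarith [hw.2])
      rwa [show v.u x0 - v.Ds {x0} + (w - (v.u x0 - v.Ds {x0})) = w by ring] at h
    have hRm : ∀ w ∈ Icc (v.u x0 - v.Ds {x0}) (v.u x0), Φ x0 (v.u x0) ≤ Φ x0 w := by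
      intro w hw
      have h := JumpAux.right_variation J1 J2 Φ hΦc v hmin hbv' hD hae hint
        (le_of_lt hx0.1) hx0.2 (cc := w - v.u x0) (by linarith [hw.2]) (by linarith [hw.1])
      rwa [show v.u x0 + (w - v.u x0) = w by ring] at h
    refine ⟨le_antisymm (hLm (v.u x0) ⟨by linarith, le_rfl⟩)
      (hRm (v.u x0 - v.Ds {x0}) ⟨le_rfl, by linarith⟩), hLm⟩
  · intro hne w hw
    obtain ⟨hr, hl⟩ := hlim 0 ⟨le_rfl, by norm_num⟩
    rw [hl] at hw
    rw [hr] at hw ⊢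
    have h := JumpAux.right_variation J1 J2 Φ hΦc v hmin hbv' hD hae hint le_rfl one_pos
      (cc := w - v.u 0) (by linarith [hw.2]) (by linarith [hw.1])
    rwa [show v.u 0 + (w - v.u 0) = w by ring] at h
  · intro hne w hw
    obtain ⟨hr, hl⟩ := hlim 1 ⟨by norm_num, le_rfl⟩
    rw [hr] at hw
    rw [hl] at hw ⊢
    have h := JumpAux.left_variation J1 J2 Φ hΦc v hmin hbv' hD hae hint one_pos le_rfl
      (cc := w - (v.u 1 - v.Ds {1})) (by linarith [hw.1]) (by linarith [hw.2])
    rwa [show v.u 1 - v.Ds {1} + (w - (v.u 1 - v.Ds {1})) = w by ring] at h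
end
end
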